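/- arXiv:2008.03181 — 3 statements merged into one kernel-verified Lean document; each statement's English description precedes it below -/
import Mathlib

section
/- Let λ, T > 0, let K be a Poisson(λT)-distributed random variable, let (τ_k)_{k≥1} be i.i.d. random variables uniformly distributed on [0,T], and let (A_k)_{k≥1} be i.i.d. real random variables with mean 0 and finite variance σ_A², with K, (τ_k), (A_k) mutually independent. Then for all bounded measurable functions φ₁, φ₂ : ℝ → ℝ, E[(Σ_{k=1}^{K} A_k φ₁(τ_k)) · (Σ_{k=1}^{K} A_k φ₂(τ_k))] = λ σ_A² ∫_0^T φ₁(t) φ₂(t) dt. -/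
/-!
Conditionally on `K = n`, which is independent of the marks `(τ_k, A_k)`, the cross terms
`A_j φ₁(τ_j) · A_k φ₂(τ_k)` with `j ≠ k` have mean zero because the amplitudes are centred,
and each diagonal term has mean `σ_A² · T⁻¹ ∫₀ᵀ φ₁ φ₂` because the position is uniform and
independent of its amplitude. Hence `E[⟨φ₁,w⟩⟨φ₂,w⟩ | K = n] = n σ_A² T⁻¹ ∫₀ᵀ φ₁ φ₂`, and
averaging over `K` with `E K = λT` gives the claim. Summing over `n` under the integral is
justified because, for `|φᵢ| ≤ Cᵢ`, the conditional mean of `|⟨φ₁,w⟩⟨φ₂,w⟩|` given `K = n` is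
at most `C₁ C₂ σ_A² n²` (Cauchy–Schwarz), and `E K² < ∞`.
-/

open MeasureTheory ProbabilityTheory Finset
open scoped NNReal ENNReal

theorem abs_sum_mul_mul_sum_mul_le {ι : Type*} (s : Finset ι) (a u v : ι → ℝ) {C₁ C₂ : ℝ}
    (hu : ∀ i, |u i| ≤ C₁) (hv : ∀ i, |v i| ≤ C₂) :
    |(∑ i ∈ s, a i * u i) * ∑ i ∈ s, a i * v i| ≤ C₁ * C₂ * (#s * ∑ i ∈ s, a i ^ 2) := by
  rcases s.eq_empty_or_nonempty with rfl | ⟨i, -⟩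
  · simp
  have hC₁ : 0 ≤ C₁ := (abs_nonneg _).trans (hu i)
  have hC₂ : 0 ≤ C₂ := (abs_nonneg _).trans (hv i)
  have habs (w : ι → ℝ) (C : ℝ) (hw : ∀ i, |w i| ≤ C) :
      |∑ i ∈ s, a i * w i| ≤ C * ∑ i ∈ s, |a i| := by
    refine (abs_sum_le_sum_abs _ _).trans ?_
    rw [mul_sum]
    gcongr with i
    rw [abs_mul, mul_comm]
    exact mul_le_mul_of_nonneg_right (hw i) (abs_nonneg _)
  calc |(∑ i ∈ s, a i * u i) * ∑ i ∈ s, a i * v i|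
      ≤ (C₁ * ∑ i ∈ s, |a i|) * (C₂ * ∑ i ∈ s, |a i|) := by
        rw [abs_mul]
        exact mul_le_mul (habs u C₁ hu) (habs v C₂ hv) (abs_nonneg _) (by positivity)
    _ = C₁ * C₂ * (∑ i ∈ s, |a i|) ^ 2 := by ring
    _ ≤ C₁ * C₂ * (#s * ∑ i ∈ s, |a i| ^ 2) := by gcongr; exact sq_sum_le_card_mul_sum_sq
    _ = C₁ * C₂ * (#s * ∑ i ∈ s, a i ^ 2) := by simp only [sq_abs]

namespace ProbabilityTheory

theorem succ_mul_poissonMeasure_real_succ (r : ℝ≥0) (n : ℕ) :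
    (n + 1 : ℝ) * (poissonMeasure r).real {n + 1} = r * (poissonMeasure r).real {n} := by
  simp only [poissonMeasure_real_singleton, Nat.factorial_succ, Nat.cast_mul, Nat.cast_succ]
  field_simp
  ring

theorem hasSum_poissonMeasure_real (r : ℝ≥0) :
    HasSum (fun n : ℕ => (poissonMeasure r).real {n}) 1 := by
  simpa only [poissonMeasure_real_singleton] using hasSum_one_poissonMeasure r

theorem hasSum_mul_poissonMeasure_real (r : ℝ≥0) :
    HasSum (fun n : ℕ => n * (poissonMeasure r).real {n}) r := by
  rw [← hasSum_nat_add_iff' 1]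
  simpa [succ_mul_poissonMeasure_real_succ] using (hasSum_poissonMeasure_real r).mul_left (r : ℝ)

theorem summable_sq_mul_poissonMeasure_real (r : ℝ≥0) :
    Summable (fun n : ℕ => (n : ℝ) ^ 2 * (poissonMeasure r).real {n}) := by
  rw [← summable_nat_add_iff 1]
  have h (n : ℕ) : ((n + 1 : ℕ) : ℝ) ^ 2 * (poissonMeasure r).real {n + 1}
      = r * (n * (poissonMeasure r).real {n}) + r * (poissonMeasure r).real {n} := by
    push_cast
    linear_combination (n + 1 : ℝ) * succ_mul_poissonMeasure_real_succ r n
  simp only [h]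
  exact ((hasSum_mul_poissonMeasure_real r).summable.mul_left _).add
    ((hasSum_poissonMeasure_real r).summable.mul_left _)

end ProbabilityTheory

section

variable {Ω : Type*} [MeasurableSpace Ω] {P : Measure Ω}

theorem MeasureTheory.pdf.IsUniform.integral_comp {E : Type*} [MeasurableSpace E] {μ : Measure E}
    {X : Ω → E} {s : Set E} (hu : pdf.IsUniform X s P μ) (hX : Measurable X) {g : E → ℝ}
    (hg : Measurable g) :
    ∫ ω, g (X ω) ∂P = (μ s).toReal⁻¹ * ∫ x in s, g x ∂μ := by
  rw [← integral_map hX.aemeasurable hg.aestronglyMeasurable, hu, ProbabilityTheory.cond,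
    integral_smul_measure, smul_eq_mul, ENNReal.toReal_inv]

theorem integral_sum_mul_sum_of_orthogonal {ι : Type*} [DecidableEq ι] (s : Finset ι)
    {X Y : ι → Ω → ℝ} {v : ℝ} (hint : ∀ j k, Integrable (fun ω => X j ω * Y k ω) P)
    (horth : ∀ j k, ∫ ω, X j ω * Y k ω ∂P = if j = k then v else 0) :
    ∫ ω, (∑ j ∈ s, X j ω) * (∑ k ∈ s, Y k ω) ∂P = #s * v := by
  simp_rw [sum_mul_sum]
  rw [integral_finsetSum _ fun j _ => integrable_finsetSum _ fun k _ => hint j k]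
  simp_rw [integral_finsetSum _ fun k _ => hint _ k, horth]
  simp

namespace ProbabilityTheory

theorem hasSum_integral_of_indepFun_index {K : Ω → ℕ} {W : ℕ → Ω → ℝ} (hK : Measurable K)
    (hW : ∀ n, Integrable (W n) P) (hind : ∀ n, IndepFun K (W n) P)
    (hsum : Summable fun n => (P.map K).real {n} * ∫ ω, |W n ω| ∂P) :
    HasSum (fun n => (P.map K).real {n} * ∫ ω, W n ω ∂P) (∫ ω, W (K ω) ω ∂P) := by
  set e : ℕ → ℕ → ℝ := fun n => ({n} : Set ℕ).indicator 1
  have hem (n : ℕ) : Measurable (e n) := measurable_from_top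
  have he (n : ℕ) : ∫ ω, e n (K ω) ∂P = (P.map K).real {n} := by
    rw [← integral_map hK.aemeasurable measurable_from_top.aestronglyMeasurable,
      integral_indicator_one (measurableSet_singleton n)]
  have hsplit (n : ℕ) {g : ℝ → ℝ} (hg : Measurable g) :
      ∫ ω, e n (K ω) * g (W n ω) ∂P = (P.map K).real {n} * ∫ ω, g (W n ω) ∂P := by
    rw [← he]
    exact ((hind n).comp (hem n) hg).integral_fun_mul_eq_mul_integral
      ((hem n).comp hK).aestronglyMeasurable
      (hg.comp_aemeasurable (hW n).aemeasurable).aestronglyMeasurable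
  have hsplit_id (n : ℕ) := hsplit n measurable_id
  simp only [id_eq] at hsplit_id
  have htsum (ω : Ω) : ∑' n, e n (K ω) * W n ω = W (K ω) ω := by
    rw [tsum_eq_single (K ω) fun n hn => by simp [e, Ne.symm hn]]
    simp [e]
  have hnorm (n : ℕ) (ω : Ω) : ‖e n (K ω) * W n ω‖ = e n (K ω) * |W n ω| := by
    by_cases h : K ω = n <;> simp [e, h]
  have hF := hasSum_integral_of_summable_integral_norm (μ := P)
    (F := fun n ω => e n (K ω) * W n ω)
    (fun n => (hW n).bdd_mul (c := 1) ((hem n).comp hK).aestronglyMeasurable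
      (.of_forall fun ω => by by_cases h : K ω = n <;> simp [e, h]))
    (hsum.congr fun n => by simp only [hnorm, hsplit n continuous_abs.measurable])
  simpa only [htsum, hsplit_id] using hF

theorem integral_poissonIndex_eq_mul {K : Ω → ℕ} {W : ℕ → Ω → ℝ} {r : ℝ≥0} {a B : ℝ}
    (hK : Measurable K) (hKdist : P.map K = poissonMeasure r) (hW : ∀ n, Integrable (W n) P)
    (hind : ∀ n, IndepFun K (W n) P) (hmean : ∀ n, ∫ ω, W n ω ∂P = n * a)
    (hbound : ∀ n, ∫ ω, |W n ω| ∂P ≤ n ^ 2 * B) :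
    ∫ ω, W (K ω) ω ∂P = r * a := by
  have hsum := hasSum_integral_of_indepFun_index hK hW hind
    (((summable_sq_mul_poissonMeasure_real r).mul_right B).of_nonneg_of_le
      (fun n => mul_nonneg measureReal_nonneg (integral_nonneg fun _ => abs_nonneg _))
      fun n => by
        rw [hKdist]
        exact (mul_le_mul_of_nonneg_left (hbound n) measureReal_nonneg).trans_eq (by ring))
  rw [hKdist] at hsum
  simp only [hmean] at hsum
  exact hsum.unique (((hasSum_mul_poissonMeasure_real r).mul_right a).congr_fun fun n => by ring)

theorem iIndepFun.indepFun_of_measurable_iSup {ι β γ : Type*} [mβ : MeasurableSpace β]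
    [MeasurableSpace γ] {X : Ω → β} {G : ι → Ω → β}
    (h : iIndepFun (Sum.elim (fun _ : Unit => X) G) P) (hX : Measurable X)
    (hG : ∀ i, Measurable (G i)) {Y : Ω → γ}
    (hY : Measurable[⨆ i, mβ.comap (G i)] Y) : IndepFun X Y P := by
  have hle : ∀ i, mβ.comap (Sum.elim (fun _ : Unit => X) G i) ≤ ‹MeasurableSpace Ω› := by
    rintro (_ | i)
    exacts [hX.comap_le, (hG i).comap_le]
  have hST := indep_iSup_of_disjoint hle h.iIndep (S := {Sum.inl ()}) (T := Set.range Sum.inr)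
    (by simp)
  rw [IndepFun_iff_Indep]
  refine indep_of_indep_of_le_right (indep_of_indep_of_le_left hST ?_) ?_
  · exact le_iSup₂_of_le (f := fun i _ => mβ.comap (Sum.elim (fun _ : Unit => X) G i))
      (Sum.inl ()) rfl le_rfl
  · exact (measurable_iff_comap_le.1 hY).trans (iSup_le fun i =>
      le_iSup₂_of_le (f := fun i _ => mβ.comap (Sum.elim (fun _ : Unit => X) G i))
        (Sum.inr i) ⟨i, rfl⟩ le_rfl)

end ProbabilityTheory

end

section

variable {Ω : Type*}

/-- `⟨φ, w⟩` for the noise `w = ∑_{k<n} A_k δ(· - τ_k)` made of the first `n` impulses. -/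
def impulseSum (τ A : ℕ → Ω → ℝ) (φ : ℝ → ℝ) (n : ℕ) (ω : Ω) : ℝ :=
  ∑ k ∈ range n, A k ω * φ (τ k ω)

theorem measurable_impulseSum {m : MeasurableSpace Ω} {τ A : ℕ → Ω → ℝ} {φ : ℝ → ℝ}
    (hτ : ∀ k, Measurable[m] (τ k)) (hA : ∀ k, Measurable[m] (A k)) (hφ : Measurable φ)
    (n : ℕ) : Measurable[m] (impulseSum τ A φ n) :=
  Finset.measurable_fun_sum _ fun k _ => (hA k).mul (hφ.comp (hτ k))

variable [MeasurableSpace Ω] {P : Measure Ω} {τ A : ℕ → Ω → ℝ} {φ₁ φ₂ : ℝ → ℝ}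

theorem integral_impulse_mul_impulse (hind : iIndepFun (Sum.elim τ A) P)
    (hτ : ∀ k, Measurable (τ k)) (hA : ∀ k, Measurable (A k)) (hmean : ∀ k, ∫ ω, A k ω ∂P = 0)
    (hφ₁ : Measurable φ₁) (hφ₂ : Measurable φ₂) (j k : ℕ) :
    ∫ ω, A j ω * φ₁ (τ j ω) * (A k ω * φ₂ (τ k ω)) ∂P
      = if j = k then (∫ ω, A j ω ^ 2 ∂P) * ∫ ω, φ₁ (τ j ω) * φ₂ (τ j ω) ∂P else 0 := by
  have hAτ (i : ℕ) : IndepFun (A i) (τ i) P :=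
    hind.indepFun (i := Sum.inr i) (j := Sum.inl i) Sum.inr_ne_inl
  split_ifs with hjk
  · subst hjk
    calc _ = ∫ ω, A j ω ^ 2 * (φ₁ (τ j ω) * φ₂ (τ j ω)) ∂P := by
          congr 1; funext ω; ring
      _ = _ := ((hAτ j).comp (measurable_id.pow_const 2)
          (hφ₁.mul hφ₂)).integral_fun_mul_eq_mul_integral
          ((hA j).pow_const 2).aestronglyMeasurable
          ((hφ₁.mul hφ₂).comp (hτ j)).aestronglyMeasurable
  · have hcentered (i : ℕ) : ∫ ω, A i ω * φ₁ (τ i ω) ∂P = 0 := by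
      refine (((hAτ i).comp measurable_id hφ₁).integral_fun_mul_eq_mul_integral
        (hA i).aestronglyMeasurable (hφ₁.comp (hτ i)).aestronglyMeasurable).trans ?_
      simp [hmean]
    have hF : ∀ i, Measurable (Sum.elim τ A i) := by
      rintro (i | i)
      exacts [hτ i, hA i]
    have hpair := hind.indepFun_prodMk_prodMk hF (Sum.inl j) (Sum.inr j) (Sum.inl k) (Sum.inr k)
      (by simp [hjk]) Sum.inl_ne_inr Sum.inr_ne_inl (by simp [hjk])
    refine ((hpair.comp (measurable_snd.mul (hφ₁.comp measurable_fst))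
      (measurable_snd.mul (hφ₂.comp measurable_fst))).integral_fun_mul_eq_mul_integral
      ((hA j).mul (hφ₁.comp (hτ j))).aestronglyMeasurable
      ((hA k).mul (hφ₂.comp (hτ k))).aestronglyMeasurable).trans ?_
    simp [hcentered]

theorem integrable_impulse_mul_impulse (hτ : ∀ k, Measurable (τ k))
    (hA : ∀ k, MemLp (A k) 2 P) (hφ₁ : Measurable φ₁) (hφ₂ : Measurable φ₂) {C₁ C₂ : ℝ}
    (hφ₁b : ∀ x, |φ₁ x| ≤ C₁) (hφ₂b : ∀ x, |φ₂ x| ≤ C₂) (j k : ℕ) :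
    Integrable (fun ω => A j ω * φ₁ (τ j ω) * (A k ω * φ₂ (τ k ω))) P := by
  have hC₁ : 0 ≤ C₁ := (abs_nonneg _).trans (hφ₁b 0)
  refine (((hA j).integrable_mul (hA k)).mul_bdd (c := C₁ * C₂)
    ((hφ₁.comp (hτ j)).mul (hφ₂.comp (hτ k))).aestronglyMeasurable
    (.of_forall fun ω => ?_)).congr (.of_forall fun ω => ?_)
  · simp only [Real.norm_eq_abs, abs_mul, Function.comp_apply, Pi.mul_apply]
    exact mul_le_mul (hφ₁b _) (hφ₂b _) (abs_nonneg _) hC₁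
  · simp only [Function.comp_apply, Pi.mul_apply]
    ring

theorem integral_impulseSum_mul_impulseSum (hind : iIndepFun (Sum.elim τ A) P)
    (hτ : ∀ k, Measurable (τ k)) (hA : ∀ k, Measurable (A k)) (hA₂ : ∀ k, MemLp (A k) 2 P)
    (hmean : ∀ k, ∫ ω, A k ω ∂P = 0) {v : ℝ} (hvar : ∀ k, ∫ ω, A k ω ^ 2 ∂P = v)
    (hφ₁ : Measurable φ₁) (hφ₂ : Measurable φ₂) {C₁ C₂ : ℝ} (hφ₁b : ∀ x, |φ₁ x| ≤ C₁)
    (hφ₂b : ∀ x, |φ₂ x| ≤ C₂) {c : ℝ} (hc : ∀ k, ∫ ω, φ₁ (τ k ω) * φ₂ (τ k ω) ∂P = c) (n : ℕ) :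
    ∫ ω, impulseSum τ A φ₁ n ω * impulseSum τ A φ₂ n ω ∂P = n * (v * c) := by
  simpa [impulseSum] using integral_sum_mul_sum_of_orthogonal (range n) (v := v * c)
    (integrable_impulse_mul_impulse hτ hA₂ hφ₁ hφ₂ hφ₁b hφ₂b) fun j k => by
      rw [integral_impulse_mul_impulse hind hτ hA hmean hφ₁ hφ₂, hvar, hc]

theorem integrable_impulseSum_mul_impulseSum (hτ : ∀ k, Measurable (τ k))
    (hA : ∀ k, Measurable (A k)) (hA₂ : ∀ k, MemLp (A k) 2 P) (hφ₁ : Measurable φ₁)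
    (hφ₂ : Measurable φ₂) {C₁ C₂ : ℝ} (hφ₁b : ∀ x, |φ₁ x| ≤ C₁) (hφ₂b : ∀ x, |φ₂ x| ≤ C₂)
    (n : ℕ) : Integrable (fun ω => impulseSum τ A φ₁ n ω * impulseSum τ A φ₂ n ω) P :=
  ((integrable_finsetSum _ fun k _ => (hA₂ k).integrable_sq).const_mul (C₁ * C₂ * n)).mono'
    ((measurable_impulseSum hτ hA hφ₁ n).mul
      (measurable_impulseSum hτ hA hφ₂ n)).aestronglyMeasurable
    (.of_forall fun ω => by
      simpa [impulseSum, mul_assoc] using abs_sum_mul_mul_sum_mul_le (range n) (A · ω) _ _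
        (fun k => hφ₁b (τ k ω)) (fun k => hφ₂b (τ k ω)))

theorem integral_abs_impulseSum_mul_impulseSum_le (hA₂ : ∀ k, MemLp (A k) 2 P) {v : ℝ}
    (hvar : ∀ k, ∫ ω, A k ω ^ 2 ∂P = v) {C₁ C₂ : ℝ} (hφ₁b : ∀ x, |φ₁ x| ≤ C₁)
    (hφ₂b : ∀ x, |φ₂ x| ≤ C₂) (n : ℕ) :
    ∫ ω, |impulseSum τ A φ₁ n ω * impulseSum τ A φ₂ n ω| ∂P ≤ n ^ 2 * (C₁ * C₂ * v) := by
  have hdom := integrable_finsetSum (range n) fun k _ => (hA₂ k).integrable_sq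
  calc _ ≤ ∫ ω, C₁ * C₂ * (n * ∑ k ∈ range n, A k ω ^ 2) ∂P :=
        integral_mono_of_nonneg (.of_forall fun ω => abs_nonneg _)
          ((hdom.const_mul n).const_mul _)
          (.of_forall fun ω => by
            simpa [impulseSum] using abs_sum_mul_mul_sum_mul_le (range n) (A · ω) _ _
              (fun k => hφ₁b (τ k ω)) (fun k => hφ₂b (τ k ω)))
    _ = n ^ 2 * (C₁ * C₂ * v) := by
        rw [integral_const_mul, integral_const_mul, integral_finsetSum _ fun k _ =>
          (hA₂ k).integrable_sq]
        simp [hvar]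
        ring


theorem indepFun_impulseSum_mul_impulseSum {K : Ω → ℕ}
    (hind : iIndepFun (Sum.elim (fun _ : Unit => fun ω => (K ω : ℝ)) (Sum.elim τ A)) P)
    (hK : Measurable K) (hτ : ∀ k, Measurable (τ k)) (hA : ∀ k, Measurable (A k))
    (hφ₁ : Measurable φ₁) (hφ₂ : Measurable φ₂) (n : ℕ) :
    IndepFun K (fun ω => impulseSum τ A φ₁ n ω * impulseSum τ A φ₂ n ω) P := by
  have hle (i : ℕ ⊕ ℕ) : Measurable[⨆ i, (borel ℝ).comap (Sum.elim τ A i)] (Sum.elim τ A i) :=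
    measurable_iff_comap_le.2 (le_iSup_of_le i le_rfl)
  have h := hind.indepFun_of_measurable_iSup (measurable_from_top.comp hK)
    (by rintro (k | k); exacts [hτ k, hA k])
    ((measurable_impulseSum (hle <| .inl ·) (hle <| .inr ·) hφ₁ n).mul
      (measurable_impulseSum (hle <| .inl ·) (hle <| .inr ·) hφ₂ n))
  rw [show K = Nat.floor ∘ fun ω => (K ω : ℝ) from funext fun ω => (Nat.floor_natCast _).symm]
  exact h.comp Nat.measurable_floor measurable_id
end

theorem compound_poisson_noise_correlation_general {Ω : Type*} [MeasurableSpace Ω] (P : Measure Ω)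
    [IsProbabilityMeasure P] (lam T : ℝ≥0) (hT : 0 < T) (σA : ℝ)
    (K : Ω → ℕ) (τ A : ℕ → Ω → ℝ)
    (hKm : Measurable K) (hτm : ∀ k, Measurable (τ k)) (hAm : ∀ k, Measurable (A k))
    (hKdist : Measure.map K P = poissonMeasure (lam * T))
    (hτdist : ∀ k, pdf.IsUniform (τ k) (Set.Icc (0 : ℝ) (T : ℝ)) P)
    (hAiid : ∀ k, Measure.map (A k) P = Measure.map (A 0) P)
    (hAint2 : Integrable (fun ω => (A 0 ω) ^ 2) P)
    (hAmean : ∫ ω, A 0 ω ∂P = 0) (hAvar : ∫ ω, (A 0 ω) ^ 2 ∂P = σA ^ 2)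
    (hindep : iIndepFun
      (fun i : Unit ⊕ ℕ ⊕ ℕ =>
        Sum.elim (fun _ : Unit => fun ω => (K ω : ℝ)) (Sum.elim τ A) i) P)
    (φ₁ φ₂ : ℝ → ℝ) (hφ₁ : Measurable φ₁) (hφ₂ : Measurable φ₂)
    (hφ₁b : ∃ C, ∀ x, |φ₁ x| ≤ C) (hφ₂b : ∃ C, ∀ x, |φ₂ x| ≤ C) :
    ∫ ω, (∑ k ∈ Finset.range (K ω), A k ω * φ₁ (τ k ω))
        * (∑ k ∈ Finset.range (K ω), A k ω * φ₂ (τ k ω)) ∂P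
      = lam * σA ^ 2 * ∫ t in (0 : ℝ)..(T : ℝ), φ₁ t * φ₂ t := by
  obtain ⟨C₁, hφ₁b⟩ := hφ₁b
  obtain ⟨C₂, hφ₂b⟩ := hφ₂b
  have hAid (k : ℕ) : IdentDistrib (A k) (A 0) P P :=
    ⟨(hAm k).aemeasurable, (hAm 0).aemeasurable, hAiid k⟩
  have hA₂ (k : ℕ) : MemLp (A k) 2 P := (hAid k).memLp_iff.2
    ((memLp_two_iff_integrable_sq (hAm 0).aestronglyMeasurable).2 hAint2)
  have hmean (k : ℕ) : ∫ ω, A k ω ∂P = 0 := (hAid k).integral_eq.trans hAmean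
  have hvar (k : ℕ) : ∫ ω, A k ω ^ 2 ∂P = σA ^ 2 :=
    ((hAid k).comp (measurable_id.pow_const 2)).integral_eq.trans hAvar
  set c := (T : ℝ)⁻¹ * ∫ t in (0 : ℝ)..T, φ₁ t * φ₂ t
  have hc (k : ℕ) : ∫ ω, φ₁ (τ k ω) * φ₂ (τ k ω) ∂P = c := by
    rw [(hτdist k).integral_comp (hτm k) (g := fun t => φ₁ t * φ₂ t) (hφ₁.mul hφ₂),
      Real.volume_Icc]
    simp [c, intervalIntegral.integral_of_le, integral_Icc_eq_integral_Ioc]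
  have hτA : iIndepFun (Sum.elim τ A) P := (hindep.precomp Sum.inr_injective :)
  rw [show (lam : ℝ) * σA ^ 2 * ∫ t in (0 : ℝ)..T, φ₁ t * φ₂ t = ((lam * T : ℝ≥0) : ℝ) *
      (σA ^ 2 * c) by simp only [c]; push_cast; field_simp]
  exact integral_poissonIndex_eq_mul hKm hKdist
    (integrable_impulseSum_mul_impulseSum hτm hAm hA₂ hφ₁ hφ₂ hφ₁b hφ₂b)
    (indepFun_impulseSum_mul_impulseSum hindep hKm hτm hAm hφ₁ hφ₂)
    (integral_impulseSum_mul_impulseSum hτA hτm hAm hA₂ hmean hvar hφ₁ hφ₂ hφ₁b hφ₂b hc)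
    (integral_abs_impulseSum_mul_impulseSum_le hA₂ hvar hφ₁b hφ₂b)

/-- Correlation identity for a compound-Poisson Lévy white noise `w = Σ_k A_k δ(·-τ_k)`
with impulse rate `λ` on `[0,T]` (Proposition 1): if `K` is Poisson(λT)-distributed, the
`(τ_k)` are i.i.d. uniform on `[0,T]`, the `(A_k)` are i.i.d. with mean `0` and finite
variance `σ_A²`, and `K`, `(τ_k)`, `(A_k)` are mutually independent, then for all bounded
measurable `φ₁ φ₂`,
`E[⟨φ₁,w⟩⟨φ₂,w⟩] = λ σ_A² ∫_0^T φ₁(t) φ₂(t) dt`. -/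
theorem compound_poisson_noise_correlation {Ω : Type*} [MeasurableSpace Ω] (P : Measure Ω)
    [IsProbabilityMeasure P] (lam T : ℝ≥0) (hlam : 0 < lam) (hT : 0 < T) (σA : ℝ)
    (K : Ω → ℕ) (τ A : ℕ → Ω → ℝ)
    (hKm : Measurable K) (hτm : ∀ k, Measurable (τ k)) (hAm : ∀ k, Measurable (A k))
    (hKdist : Measure.map K P = poissonMeasure (lam * T))
    (hτdist : ∀ k, pdf.IsUniform (τ k) (Set.Icc (0 : ℝ) (T : ℝ)) P)
    (hAiid : ∀ k, Measure.map (A k) P = Measure.map (A 0) P)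
    (hAint : Integrable (A 0) P) (hAint2 : Integrable (fun ω => (A 0 ω) ^ 2) P)
    (hAmean : ∫ ω, A 0 ω ∂P = 0) (hAvar : ∫ ω, (A 0 ω) ^ 2 ∂P = σA ^ 2)
    (hindep : iIndepFun
      (fun i : Unit ⊕ ℕ ⊕ ℕ =>
        Sum.elim (fun _ : Unit => fun ω => (K ω : ℝ)) (Sum.elim τ A) i) P)
    (φ₁ φ₂ : ℝ → ℝ) (hφ₁ : Measurable φ₁) (hφ₂ : Measurable φ₂)
    (hφ₁b : ∃ C, ∀ x, |φ₁ x| ≤ C) (hφ₂b : ∃ C, ∀ x, |φ₂ x| ≤ C) :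
    ∫ ω, (∑ k ∈ Finset.range (K ω), A k ω * φ₁ (τ k ω))
        * (∑ k ∈ Finset.range (K ω), A k ω * φ₂ (τ k ω)) ∂P
      = lam * σA ^ 2 * ∫ t in (0 : ℝ)..(T : ℝ), φ₁ t * φ₂ t :=
  compound_poisson_noise_correlation_general P lam T hT σA K τ A hKm hτm hAm hKdist hτdist hAiid
    hAint2 hAmean hAvar hindep φ₁ φ₂ hφ₁ hφ₂ hφ₁b hφ₂b
end

section
/- Let λ > 0, let ν be a probability law on ℝ, and let M ≥ 1 be a natural number. If S₁, …, S_M are independent compound-Poisson random variables, each with rate λ/M and amplitude law ν, then S₁ + ⋯ + S_M has the same distribution as a compound-Poisson random variable with rate λ and amplitude law ν. In particular, every compound-Poisson random variable is infinitely divisible. -/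
/-!
The characteristic function of the compound-Poisson law of rate `λ` is `exp (λ (φ_ν - 1))`:
given `N = n` the sum has characteristic function `φ_ν ^ n`, and averaging `z ^ N` over a
Poisson(`λ`) variable gives `exp (λ (z - 1))`. Independence turns the characteristic function of
`S₁ + ⋯ + S_M` into the product of `M` such exponentials, whose rates add up to `λ`, and
characteristic functions determine finite measures.
-/

open MeasureTheory ProbabilityTheory
open scoped NNReal ENNReal

/-- The law of a compound-Poisson random variable `Σ_{k=1}^N A_k` with rate `lam` and
amplitude law `ν`: first draw `n` from a Poisson(`lam`) law, then return the law of the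
sum of `n` i.i.d. draws from `ν`. -/
noncomputable def compoundPoissonMeasure (lam : ℝ≥0) (ν : Measure ℝ) : Measure ℝ :=
  (poissonMeasure lam).bind
    (fun n => Measure.map (fun x : Fin n → ℝ => ∑ i, x i) (Measure.pi (fun _ : Fin n => ν)))

open Complex
open scoped Nat

lemma MeasureTheory.Measure.integral_bind {α β E : Type*} [MeasurableSpace α]
    [MeasurableSpace β] [NormedAddCommGroup E] [NormedSpace ℝ E] {μ : Measure α}
    {κ : α → Measure β} (hκ : Measurable κ) {f : β → E} (hf : Integrable f (μ.bind κ)) :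
    ∫ y, f y ∂(μ.bind κ) = ∫ x, ∫ y, f y ∂κ x ∂μ := by
  let K : Kernel α β := ⟨κ, hκ⟩
  change Integrable f (K ∘ₘ μ) at hf
  change ∫ y, f y ∂(K ∘ₘ μ) = ∫ x, ∫ y, f y ∂K x ∂μ
  rw [Measure.comp_eq_comp_const_apply] at hf ⊢
  exact Kernel.integral_comp hf

lemma integral_pow_poissonMeasure (r : ℝ≥0) (z : ℂ) :
    ∫ n, z ^ n ∂poissonMeasure r = cexp (r * (z - 1)) := by
  rw [integral_poissonMeasure]
  calc ∑' n, (Real.exp (-r) * r ^ n / n ! : ℝ) • z ^ n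
  _ = ∑' n, (Real.exp (-r) : ℂ) * ((r * z) ^ n / n !) := by
      congr with n
      rw [Complex.real_smul]
      push_cast
      ring
  _ = Real.exp (-r) * cexp (r * z) := by
      rw [tsum_mul_left, (NormedSpace.expSeries_div_hasSum_exp (r * z : ℂ)).tsum_eq,
        exp_eq_exp_ℂ]
  _ = cexp (r * (z - 1)) := by
      rw [ofReal_exp, ← Complex.exp_add]
      push_cast
      ring_nf

lemma charFun_map_sum_pi_const (ν : Measure ℝ) [IsProbabilityMeasure ν] (n : ℕ) :
    charFun (Measure.map (fun x : Fin n → ℝ => ∑ i, x i) (Measure.pi fun _ => ν))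
      = charFun ν ^ n := by
  rw [charFun_map_sum_pi_eq_prod, Finset.prod_const, Finset.card_univ, Fintype.card_fin]

instance (lam : ℝ≥0) (ν : Measure ℝ) [IsProbabilityMeasure ν] :
    IsProbabilityMeasure (compoundPoissonMeasure lam ν) :=
  isProbabilityMeasure_bind (measurable_of_countable _).aemeasurable
    (ae_of_all _ fun _ => Measure.isProbabilityMeasure_map (by fun_prop))

lemma charFun_compoundPoissonMeasure (lam : ℝ≥0) (ν : Measure ℝ) [IsProbabilityMeasure ν]
    (t : ℝ) : charFun (compoundPoissonMeasure lam ν) t = cexp (lam * (charFun ν t - 1)) := by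
  have h_int : Integrable (fun x : ℝ => cexp (t * x * I)) (compoundPoissonMeasure lam ν) :=
    (integrable_const (1 : ℝ)).mono (by fun_prop)
      (ae_of_all _ fun x => by simp [← ofReal_mul, norm_exp_ofReal_mul_I])
  rw [charFun_apply_real, compoundPoissonMeasure,
    Measure.integral_bind (measurable_of_countable _) h_int]
  simp_rw [← charFun_apply_real, charFun_map_sum_pi_const, Pi.pow_apply]
  exact integral_pow_poissonMeasure lam _

theorem compound_poisson_infinitely_divisible_general {Ω : Type*} [MeasurableSpace Ω] (P : Measure Ω)
    [IsProbabilityMeasure P] (lam : ℝ≥0)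
    (ν : Measure ℝ) [IsProbabilityMeasure ν] (M : ℕ) (hM : 1 ≤ M)
    (S : Fin M → Ω → ℝ) (hmeas : ∀ i, Measurable (S i))
    (hindep : iIndepFun S P)
    (hdist : ∀ i, Measure.map (S i) P = compoundPoissonMeasure (lam / M) ν) :
    Measure.map (fun ω => ∑ i : Fin M, S i ω) P = compoundPoissonMeasure lam ν := by
  refine Measure.ext_of_charFun (funext fun t => ?_)
  rw [hindep.charFun_map_fun_sum_eq_prod fun i => (hmeas i).aemeasurable]
  simp only [Finset.prod_apply, hdist, charFun_compoundPoissonMeasure, Finset.prod_const,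
    Finset.card_univ, Fintype.card_fin, ← Complex.exp_nat_mul]
  have hM0 : (M : ℂ) ≠ 0 := by exact_mod_cast (by omega : M ≠ 0)
  congr 1
  push_cast
  field_simp

/-- Infinite divisibility of compound-Poisson laws: the sum of `M` independent
compound-Poisson random variables, each of rate `λ/M` and amplitude law `ν`, is a
compound-Poisson random variable of rate `λ` and amplitude law `ν`. -/
theorem compound_poisson_infinitely_divisible {Ω : Type*} [MeasurableSpace Ω] (P : Measure Ω)
    [IsProbabilityMeasure P] (lam : ℝ≥0) (hlam : 0 < lam)
    (ν : Measure ℝ) [IsProbabilityMeasure ν] (M : ℕ) (hM : 1 ≤ M)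
    (S : Fin M → Ω → ℝ) (hmeas : ∀ i, Measurable (S i))
    (hindep : iIndepFun S P)
    (hdist : ∀ i, Measure.map (S i) P = compoundPoissonMeasure (lam / M) ν) :
    Measure.map (fun ω => ∑ i : Fin M, S i ω) P = compoundPoissonMeasure lam ν :=
  compound_poisson_infinitely_divisible_general P lam ν M hM S hmeas hindep hdist
end

section
/- Let h > 0, let M ≥ 1, let α₁, …, α_M ∈ ℂ, and let c₁, …, c_M ∈ ℂ. Define r₀, …, r_M ∈ ℂ as the coefficients of the polynomial ∏_{i=1}^{M} (1 − e^{α_i h} X) = Σ_{j=0}^{M} r_j X^j, and define ρ : ℝ → ℂ by ρ(t) = Σ_{i=1}^{M} c_i e^{α_i t} for t > 0 and ρ(t) = 0 for t ≤ 0. Then the function β(t) = Σ_{j=0}^{M} r_j ρ(t − jh) vanishes for every t ≤ 0 and for every t > Mh; i.e., the support of β is contained in [0, Mh]. -/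
/-!
For `t > Mh` every shift `t - jh` with `j ≤ M` is positive, so `β(t)` is the filter
`∑ⱼ rⱼ f(t - jh)` applied to the pure exponential sum `f(t) = ∑ᵢ cᵢ e^{αᵢ t}`. On `e^{α t}` the
filter acts as multiplication by `P(e^{-α h})`, where `P = ∏ᵢ (1 - e^{αᵢ h} X)`, and
`P(e^{-αᵢ h}) = 0` because of the factor `1 - e^{αᵢ h} X`. For `t ≤ 0` all shifts are
non-positive and causality gives `β(t) = 0`.
-/

open Polynomial Complex Finset

theorem natDegree_prod_one_sub_C_mul_X_le {R ι : Type*} [CommRing R] (s : Finset ι)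
    (a : ι → R) : (∏ i ∈ s, (1 - C (a i) * X)).natDegree ≤ #s := by
  refine (natDegree_prod_le _ _).trans ?_
  rw [card_eq_sum_ones]
  exact sum_le_sum fun i _ => by compute_degree

theorem eval_inv_prod_one_sub_C_mul_X {K ι : Type*} [Field K] {s : Finset ι} {a : ι → K}
    {i : ι} (hi : i ∈ s) (ha : a i ≠ 0) : (∏ j ∈ s, (1 - C (a j) * X)).eval (a i)⁻¹ = 0 := by
  rw [eval_prod]
  exact prod_eq_zero hi (by simp [ha])

theorem sum_coeff_mul_exp_sub_mul {P : ℂ[X]} {n : ℕ} (hP : P.natDegree < n) (a t h : ℂ) :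
    ∑ j ∈ range n, P.coeff j * exp (a * (t - j * h)) = exp (a * t) * P.eval (exp (-(a * h))) := by
  rw [eval_eq_sum_range' hP, mul_sum]
  refine sum_congr rfl fun j _ => ?_
  rw [← exp_nat_mul, mul_left_comm, ← exp_add]
  ring_nf

theorem sum_coeff_prod_mul_expSum_sub_eq_zero {ι : Type*} [Fintype ι] (α c : ι → ℂ)
    (h t : ℂ) :
    ∑ j ∈ range (Fintype.card ι + 1), (∏ i, (1 - C (exp (α i * h)) * X)).coeff j *
      ∑ i, c i * exp (α i * (t - j * h)) = 0 := by
  have hdeg : (∏ i, (1 - C (exp (α i * h)) * X)).natDegree < Fintype.card ι + 1 :=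
    Nat.lt_succ_of_le (natDegree_prod_one_sub_C_mul_X_le univ _)
  simp_rw [mul_sum]
  rw [sum_comm]
  refine sum_eq_zero fun i _ => ?_
  simp_rw [mul_left_comm _ (c i), ← mul_sum]
  rw [sum_coeff_mul_exp_sub_mul hdeg, exp_neg,
    eval_inv_prod_one_sub_C_mul_X (a := fun i => exp (α i * h)) (mem_univ i) (exp_ne_zero _),
    mul_zero, mul_zero]

theorem bspline_compact_support_general (h : ℝ) (hh : 0 < h) (M : ℕ)
    (α : Fin M → ℂ) (c : Fin M → ℂ)
    (r : ℕ → ℂ)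
    (hr : ∀ j, r j = (∏ i : Fin M, (1 - Polynomial.C (Complex.exp (α i * h)) * Polynomial.X)).coeff j)
    (ρ : ℝ → ℂ)
    (hρ : ∀ t : ℝ, ρ t = if 0 < t then ∑ i : Fin M, c i * Complex.exp (α i * t) else 0)
    (β : ℝ → ℂ)
    (hβ : ∀ t : ℝ, β t = ∑ j ∈ Finset.range (M + 1), r j * ρ (t - j * h)) :
    (∀ t : ℝ, t ≤ 0 → β t = 0) ∧ (∀ t : ℝ, M * h < t → β t = 0) := by
  refine ⟨fun t ht => ?_, fun t ht => ?_⟩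
  · rw [hβ]
    refine sum_eq_zero fun j _ => ?_
    have hshift : ¬ 0 < t - j * h := by
      have : (0 : ℝ) ≤ j * h := by positivity
      linarith
    rw [hρ, if_neg hshift, mul_zero]
  · have hshift : ∀ j ∈ range (M + 1), 0 < t - j * h := fun j hj => by
      have : (j : ℝ) ≤ M := by exact_mod_cast Nat.lt_succ_iff.mp (mem_range.mp hj)
      nlinarith
    rw [← sum_coeff_prod_mul_expSum_sub_eq_zero α c h t, hβ, Fintype.card_fin]
    refine sum_congr rfl fun j hj => ?_
    rw [hr, hρ, if_pos (hshift j hj)]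
    push_cast
    rfl

/-- Compact support of the generalized B-spline `β = L_d^h{ρ}`: with
`ρ(t) = 𝟙_{t>0} ∑_i c_i e^{α_i t}` a causal sum of exponentials and `r_j` the coefficients
of `∏_{i=1}^M (1 - e^{α_i h} X)`, the function `β(t) = ∑_{j=0}^M r_j ρ(t - jh)` vanishes
for `t ≤ 0` and for `t > Mh`. -/
theorem bspline_compact_support (h : ℝ) (hh : 0 < h) (M : ℕ) (hM : 1 ≤ M)
    (α : Fin M → ℂ) (c : Fin M → ℂ)
    (r : ℕ → ℂ)
    (hr : ∀ j, r j = (∏ i : Fin M, (1 - Polynomial.C (Complex.exp (α i * h)) * Polynomial.X)).coeff j)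
    (ρ : ℝ → ℂ)
    (hρ : ∀ t : ℝ, ρ t = if 0 < t then ∑ i : Fin M, c i * Complex.exp (α i * t) else 0)
    (β : ℝ → ℂ)
    (hβ : ∀ t : ℝ, β t = ∑ j ∈ Finset.range (M + 1), r j * ρ (t - j * h)) :
    (∀ t : ℝ, t ≤ 0 → β t = 0) ∧ (∀ t : ℝ, M * h < t → β t = 0) :=
  bspline_compact_support_general h hh M α c r hr ρ hρ β hβ
end
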